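/- If S is a finite-dimensional subspace of a Hilbert space H and A ∈ L(H)⁺, then the pair (A,S) is compatible, i.e., there exists a bounded projection Q with R(Q) = S and AQ = Q*A. -/

import Mathlib

/-!
Write `S = N ⊕ K` with `N = S ∩ ker A` and `K = S ⊖ N`. For `A ≥ 0`, `⟪A u, u⟫ = 0` forces
`A u = 0` (Cauchy–Schwarz for `⟪A ·, ·⟫`), so the compression `T = P_K A|_K` is injective, hence
invertible because `K` is finite-dimensional. Then `Q₁ = T⁻¹ P_K A` is a projection onto `K` which
is symmetric for `⟪A ·, ·⟫` and vanishes on `ker A`, and with `P` the orthogonal projection onto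
`N ⊆ ker A` the operator `Q₁ + P (1 - Q₁)` is a compatible projection onto `K ⊔ N = S`.
-/

open ContinuousLinearMap
open scoped InnerProductSpace

section Ring

variable {R : Type*} [Ring R] {p q : R}

theorem IsIdempotentElem.add_mul_one_sub_mul_self (hq : IsIdempotentElem q) :
    (q + p * (1 - q)) * q = q := by
  rw [add_mul, mul_assoc, sub_mul, one_mul, hq.eq, sub_self, mul_zero, add_zero]

theorem IsIdempotentElem.add_mul_one_sub_mul_right (hp : IsIdempotentElem p) (hqp : q * p = 0) :
    (q + p * (1 - q)) * p = p := by
  rw [add_mul, mul_assoc, sub_mul, one_mul, hqp, sub_zero, hp.eq, zero_add]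

theorem IsIdempotentElem.add_mul_one_sub (hq : IsIdempotentElem q) (hp : IsIdempotentElem p)
    (hqp : q * p = 0) : IsIdempotentElem (q + p * (1 - q)) :=
  calc (q + p * (1 - q)) * (q + p * (1 - q))
      = (q + p * (1 - q)) * q + (q + p * (1 - q)) * p * (1 - q) := by rw [mul_add, mul_assoc]
    _ = q + p * (1 - q) := by
      rw [hq.add_mul_one_sub_mul_self, hp.add_mul_one_sub_mul_right hqp]

end Ring

theorem mul_add_mul_one_sub_eq_star_mul {R : Type*} [Ring R] [StarRing R] {a p q : R}
    (ha : IsSelfAdjoint a) (hp : IsSelfAdjoint p) (hap : a * p = 0) (haq : a * q = star q * a) :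
    a * (q + p * (1 - q)) = star (q + p * (1 - q)) * a := by
  have hpa : p * a = 0 := by
    rw [← hp.star_eq, ← ha.star_eq, ← star_mul, hap, star_zero]
  rw [star_add, star_mul, hp.star_eq, add_mul, mul_assoc, hpa, mul_zero, add_zero, mul_add,
    ← mul_assoc, hap, zero_mul, add_zero, haq]

section InnerProductSpace

variable {𝕜 E : Type*} [RCLike 𝕜] [NormedAddCommGroup E] [InnerProductSpace 𝕜 E]

namespace ContinuousLinearMap

theorem IsPositive.norm_inner_mul_le {T : E →L[𝕜] E} (hT : T.IsPositive) (x y : E) :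
    ‖⟪T x, y⟫_𝕜‖ * ‖⟪T y, x⟫_𝕜‖ ≤ RCLike.re ⟪T x, x⟫_𝕜 * RCLike.re ⟪T y, y⟫_𝕜 := by
  let core : PreInnerProductSpace.Core 𝕜 E :=
    { inner := fun u v => ⟪T u, v⟫_𝕜
      conj_inner_symm := fun u v => by
        rw [inner_conj_symm, hT.inner_left_eq_inner_right]
      re_inner_nonneg := hT.re_inner_nonneg_left
      add_left := fun u v w => by simp only [map_add, inner_add_left]
      smul_left := fun u v r => by simp only [map_smul, inner_smul_left] }
  exact InnerProductSpace.Core.inner_mul_inner_self_le (c := core) x y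

theorem IsPositive.apply_eq_zero_of_inner_self_eq_zero {T : E →L[𝕜] E} (hT : T.IsPositive)
    {x : E} (hx : ⟪T x, x⟫_𝕜 = 0) : T x = 0 := by
  have h := hT.norm_inner_mul_le x (T x)
  rw [hx, map_zero, zero_mul, hT.inner_left_eq_inner_right (T x)] at h
  rw [← inner_self_eq_zero (𝕜 := 𝕜), ← norm_eq_zero, ← mul_self_eq_zero]
  exact le_antisymm h (mul_self_nonneg _)

theorem IsPositive.injective_compression {A : E →L[𝕜] E} (hA : A.IsPositive)
    (K : Submodule 𝕜 E) [K.HasOrthogonalProjection]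
    (hK : K ⊓ LinearMap.ker (A : E →ₗ[𝕜] E) = ⊥) :
    Function.Injective (K.orthogonalProjectionOnto ∘L A ∘L K.subtypeL) := by
  refine (injective_iff_map_eq_zero _).mpr fun u hu => ?_
  have hAu : A u = 0 := by
    refine hA.apply_eq_zero_of_inner_self_eq_zero ?_
    rw [← K.inner_orthogonalProjectionOnto_eq_of_mem_right u]
    simpa using congrArg (⟪·, u⟫_𝕜) hu
  have hu_mem : (u : E) ∈ K ⊓ LinearMap.ker (A : E →ₗ[𝕜] E) := ⟨u.2, hAu⟩
  rw [hK, Submodule.mem_bot] at hu_mem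
  exact Subtype.ext hu_mem

end ContinuousLinearMap

variable [CompleteSpace E]

/-- `Q` is a projection onto `S` that is symmetric for the semi-inner product `⟪A ·, ·⟫`;
the pair `(A, S)` is called compatible when such a `Q` exists. -/
def IsCompatibleProjection (A Q : E →L[𝕜] E) (S : Submodule 𝕜 E) : Prop :=
  Q ∘L Q = Q ∧ LinearMap.range (Q : E →ₗ[𝕜] E) = S ∧ A ∘L Q = adjoint Q ∘L A

theorem ContinuousLinearMap.IsPositive.exists_isCompatibleProjection_of_inf_ker_eq_bot
    {A : E →L[𝕜] E} (hA : A.IsPositive) (K : Submodule 𝕜 E) [FiniteDimensional 𝕜 K]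
    (hK : K ⊓ LinearMap.ker (A : E →ₗ[𝕜] E) = ⊥) :
    ∃ Q : E →L[𝕜] E, IsCompatibleProjection A Q K ∧
      LinearMap.ker (A : E →ₗ[𝕜] E) ≤ LinearMap.ker (Q : E →ₗ[𝕜] E) := by
  set J := K.subtypeL
  set T := adjoint J ∘L A ∘L J with hT
  have hT_pos : T.IsPositive := hA.adjoint_conj J
  have hT_inj : Function.Injective T := by
    rw [hT, K.adjoint_subtypeL]
    exact hA.injective_compression K hK
  set e := LinearEquiv.ofInjectiveEndo (T : K →ₗ[𝕜] K) hT_inj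
  set R : K →L[𝕜] K := LinearMap.toContinuousLinearMap (e.symm : K →ₗ[𝕜] K)
  have hRT : R ∘L T = .id 𝕜 K := ext e.symm_apply_apply
  have hR : adjoint R = R := by
    have : (R : K →ₗ[𝕜] K).IsPositive :=
      LinearMap.IsPositive.toLinearMap_symm (T := e) ((isPositive_toLinearMap_iff T).mpr hT_pos)
    exact ((isPositive_toLinearMap_iff R).mp this).isSelfAdjoint.adjoint_eq
  set Q := J ∘L R ∘L adjoint J ∘L A
  have hQJ : Q ∘L J = J := by
    rw [show Q ∘L J = J ∘L (R ∘L T) by simp only [Q, T, comp_assoc], hRT, comp_id]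
  refine ⟨Q, ⟨?_, le_antisymm ?_ ?_, ?_⟩, ?_⟩
  · calc Q ∘L Q = (Q ∘L J) ∘L (R ∘L adjoint J ∘L A) := by simp only [Q, comp_assoc]
      _ = Q := by rw [hQJ]
  · simpa [Q, J] using
      LinearMap.range_comp_le_range (R ∘L adjoint J ∘L A : E →ₗ[𝕜] K) K.subtype
  · calc K = LinearMap.range ((Q ∘L J : K →L[𝕜] E) : K →ₗ[𝕜] E) := by
          rw [hQJ]; exact (Submodule.range_subtype K).symm
      _ ≤ LinearMap.range (Q : E →ₗ[𝕜] E) := LinearMap.range_comp_le_range _ _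
  · simp only [Q, adjoint_comp, hR, adjoint_adjoint, hA.isSelfAdjoint.adjoint_eq, comp_assoc]
  · intro x (hx : A x = 0)
    change Q x = 0
    simp [Q, hx]

theorem IsCompatibleProjection.add_starProjection_mul_one_sub {A Q : E →L[𝕜] E}
    {K N : Submodule 𝕜 E} [N.HasOrthogonalProjection] (hQ : IsCompatibleProjection A Q K)
    (hA : IsSelfAdjoint A) (hker : LinearMap.ker (A : E →ₗ[𝕜] E) ≤ LinearMap.ker (Q : E →ₗ[𝕜] E))
    (hN : N ≤ LinearMap.ker (A : E →ₗ[𝕜] E)) :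
    IsCompatibleProjection A (Q + N.starProjection * (1 - Q)) (K ⊔ N) := by
  obtain ⟨hQQ, hQK, hAQ⟩ := hQ
  set p := N.starProjection
  have hAp : A * p = 0 := ext fun x => hN (N.starProjection_apply_mem x)
  have hQp : Q * p = 0 := ext fun x => hker (hN (N.starProjection_apply_mem x))
  have hQ_idem : IsIdempotentElem Q := hQQ
  refine ⟨(hQ_idem.add_mul_one_sub N.isIdempotentElem_starProjection hQp).eq,
    le_antisymm ?_ ?_, ?_⟩
  · rw [← hQK, ← N.range_starProjection]
    exact (LinearMap.range_add_le _ _).trans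
      (sup_le_sup_left (LinearMap.range_comp_le_range _ _) _)
  · rw [← hQK, ← N.range_starProjection, sup_le_iff]
    constructor
    · conv_lhs => rw [← hQ_idem.add_mul_one_sub_mul_self (p := p)]
      exact LinearMap.range_comp_le_range _ _
    · conv_lhs => rw [← N.isIdempotentElem_starProjection.add_mul_one_sub_mul_right hQp]
      exact LinearMap.range_comp_le_range _ _
  · simpa only [← mul_def, ← star_eq_adjoint] using
      mul_add_mul_one_sub_eq_star_mul hA (isSelfAdjoint_starProjection N) hAp hAQ

end InnerProductSpace

theorem stmt_10
    {H : Type*} [NormedAddCommGroup H] [InnerProductSpace ℂ H] [CompleteSpace H]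
    (A : H →L[ℂ] H) (hA : A.IsPositive)
    (S : Submodule ℂ H) [FiniteDimensional ℂ S] :
    ∃ Q : H →L[ℂ] H, Q ∘L Q = Q ∧ LinearMap.range (Q : H →ₗ[ℂ] H) = S ∧ A ∘L Q = adjoint Q ∘L A := by
  set N := S ⊓ LinearMap.ker (A : H →ₗ[ℂ] H)
  set K := Nᗮ ⊓ S
  have : FiniteDimensional ℂ N := Submodule.finiteDimensional_of_le inf_le_left
  have : FiniteDimensional ℂ K := Submodule.finiteDimensional_of_le inf_le_right
  have hK : K ⊓ LinearMap.ker (A : H →ₗ[ℂ] H) = ⊥ := by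
    rw [eq_bot_iff, ← N.inf_orthogonal_eq_bot]
    exact fun x hx => ⟨⟨hx.1.2, hx.2⟩, hx.1.1⟩
  obtain ⟨Q₁, hQ₁, hker⟩ := hA.exists_isCompatibleProjection_of_inf_ker_eq_bot K hK
  have hQ := hQ₁.add_starProjection_mul_one_sub (N := N) hA.isSelfAdjoint hker inf_le_right
  rw [sup_comm, Submodule.sup_orthogonal_inf_of_hasOrthogonalProjection inf_le_left] at hQ
  exact ⟨_, hQ⟩
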